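/- For a finite poset P with |P| ≥ 2 whose incomparability graph (the complement of the comparability graph) is disconnected, the maximal proper strong modules of P are exactly the connected components of the incomparability graph, and these components are linearly ordered by P (so the quotient is a chain). -/

import Mathlib

variable {α : Type*}

/-- The incomparability graph of a poset: `x ~ y` iff `x ≠ y` and `x, y` are
incomparable (the complement of the comparability graph). -/
def incompGraph (α : Type*) [PartialOrder α] : SimpleGraph α where
  Adj x y := x ≠ y ∧ ¬ x ≤ y ∧ ¬ y ≤ x
  symm := by
    constructor
    intro x y h
    exact ⟨Ne.symm h.1, h.2.2, h.2.1⟩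
  loopless := by
    constructor
    intro x h
    exact h.1 rfl

/-- `T` is a module of the poset `α`. -/
def IsModule [PartialOrder α] (T : Set α) : Prop :=
  ∀ u ∈ T, ∀ v ∈ T, ∀ x ∉ T, ((u ≤ x ↔ v ≤ x) ∧ (x ≤ u ↔ x ≤ v))

/-- `T` is a strong module. -/
def IsStrongModule [PartialOrder α] (T : Set α) : Prop :=
  IsModule T ∧ ∀ U : Set α, IsModule U → (U ∩ T).Nonempty → U ⊆ T ∨ T ⊆ U

/-- `T` is a maximal proper strong module. -/
def IsMaxProperStrongModule [PartialOrder α] (T : Set α) : Prop :=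
  IsStrongModule T ∧ T.Nonempty ∧ T ≠ Set.univ ∧
    ∀ U : Set α, IsStrongModule U → U ≠ Set.univ → T ⊆ U → U = T

/-!
Edges of the incomparability graph cannot join elements lying on different sides of a third
element, so every element outside a component `C` compares to all of `C` in the same way: `C` is a
module, and the components are linearly ordered. Since an outside element incomparable to one
point of a module is incomparable to all of it, a module meeting `C` without lying inside `C`
swallows `C`, so `C` is strong. For maximality, let a proper strong module `U` contain `C ∋ x`, some
`w ∉ C` and miss `z`, say `x ≤ z`. The module `C(a) ∪ Ici a` contains `z` for each `a ∈ U`, so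
strongness forces `U ⊆ C(a) ∪ Ici a`; taking `a = x` and `a = w` gives `x ≤ w ≤ x`.
-/

open SimpleGraph Set

theorem setOf_reachable_ne_univ {V : Type*} {G : SimpleGraph V} (hG : ¬ G.Connected) (x : V) :
    {y | G.Reachable x y} ≠ univ := fun h =>
  hG (G.connected_iff_exists_forall_reachable.2 ⟨x, eq_univ_iff_forall.1 h⟩)

section
variable [PartialOrder α]

def incompComponent (x : α) : Set α := {y | (incompGraph α).Reachable x y}

theorem le_or_le_of_not_reachable {x y : α} (h : ¬ (incompGraph α).Reachable x y) :
    x ≤ y ∨ y ≤ x := by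
  by_contra! hc
  exact h (Adj.reachable ⟨fun hxy => h (hxy ▸ .refl x), hc⟩)

theorem le_iff_le_of_incompAdj {a b y : α} (hab : (incompGraph α).Adj a b)
    (ha : a ≤ y ∨ y ≤ a) (hb : b ≤ y ∨ y ≤ b) : (a ≤ y ↔ b ≤ y) ∧ (y ≤ a ↔ y ≤ b) := by
  obtain ⟨-, hab, hba⟩ := hab
  rcases ha with ha | ha <;> rcases hb with hb | hb <;>
    constructor <;> constructor <;> intro <;> order

theorem le_iff_le_of_reachable_of_not_reachable {a b y : α} (hab : (incompGraph α).Reachable a b)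
    (hay : ¬ (incompGraph α).Reachable a y) : (a ≤ y ↔ b ≤ y) ∧ (y ≤ a ↔ y ≤ b) := by
  obtain ⟨p⟩ := hab
  induction p with
  | nil => exact ⟨.rfl, .rfl⟩
  | cons hadj _ ih =>
    have hy : ¬ (incompGraph α).Reachable _ y := fun h => hay (hadj.reachable.trans h)
    have step := le_iff_le_of_incompAdj hadj (le_or_le_of_not_reachable hay)
      (le_or_le_of_not_reachable hy)
    exact ⟨step.1.trans (ih hy).1, step.2.trans (ih hy).2⟩

theorem le_iff_le_of_reachable_of_reachable {x x' y y' : α} (hx : (incompGraph α).Reachable x x')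
    (hy : (incompGraph α).Reachable y y') (hxy : ¬ (incompGraph α).Reachable x y) :
    x ≤ y ↔ x' ≤ y' :=
  (le_iff_le_of_reachable_of_not_reachable hx hxy).1.trans
    (le_iff_le_of_reachable_of_not_reachable hy fun h => hxy (hx.trans h.symm)).2

theorem lt_of_reachable_of_lt {a u t : α} (hu : (incompGraph α).Reachable a u)
    (ht : ¬ (incompGraph α).Reachable a t) (hta : t < a) : t < u := by
  obtain ⟨hle, hge⟩ := le_iff_le_of_reachable_of_not_reachable hu ht
  exact lt_of_le_not_ge (hge.1 hta.le) fun h => hta.not_ge (hle.2 h)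

theorem lt_of_reachable_of_gt {a u t : α} (hu : (incompGraph α).Reachable a u)
    (ht : ¬ (incompGraph α).Reachable a t) (hat : a < t) : u < t := by
  obtain ⟨hle, hge⟩ := le_iff_le_of_reachable_of_not_reachable hu ht
  exact lt_of_le_not_ge (hle.1 hat.le) fun h => hat.not_ge (hge.2 h)

theorem isModule_of_forall_lt_or_forall_gt {T : Set α}
    (h : ∀ t ∉ T, (∀ u ∈ T, u < t) ∨ (∀ u ∈ T, t < u)) : IsModule T := by
  intro u hu v hv t ht
  rcases h t ht with h | h
  · exact ⟨iff_of_true (h u hu).le (h v hv).le, iff_of_false (h u hu).not_ge (h v hv).not_ge⟩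
  · exact ⟨iff_of_false (h u hu).not_ge (h v hv).not_ge, iff_of_true (h u hu).le (h v hv).le⟩

theorem IsModule.incompAdj {U : Set α} (hU : IsModule U) {a b c : α} (ha : a ∈ U) (hb : b ∈ U)
    (hc : c ∉ U) (hac : (incompGraph α).Adj a c) : (incompGraph α).Adj b c := by
  obtain ⟨hle, hge⟩ := hU a ha b hb c hc
  exact ⟨fun h => hc (h ▸ hb), fun h => hac.2.1 (hle.2 h), fun h => hac.2.2 (hge.2 h)⟩

theorem isModule_incompComponent (x : α) : IsModule (incompComponent x) :=
  fun _ hu _ hv _ ht =>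
    le_iff_le_of_reachable_of_not_reachable (hu.symm.trans hv) (ht <| hu.trans ·)

theorem isModule_incompComponent_union_Ici (a : α) : IsModule (incompComponent a ∪ Ici a) := by
  refine isModule_of_forall_lt_or_forall_gt fun t ht => Or.inr ?_
  obtain ⟨htC, hat⟩ := not_or.1 ht
  have hta : t < a := lt_of_le_not_ge ((le_or_le_of_not_reachable htC).resolve_left hat) hat
  rintro u (hu | hu)
  · exact lt_of_reachable_of_lt hu htC hta
  · exact hta.trans_le hu

theorem isModule_incompComponent_union_Iic (a : α) : IsModule (incompComponent a ∪ Iic a) := by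
  refine isModule_of_forall_lt_or_forall_gt fun t ht => Or.inl ?_
  obtain ⟨htC, hta⟩ := not_or.1 ht
  have hat : a < t := lt_of_le_not_ge ((le_or_le_of_not_reachable htC).resolve_right hta) hta
  rintro u (hu | hu)
  · exact lt_of_reachable_of_gt hu htC hat
  · exact hu.trans_lt hat

theorem isStrongModule_incompComponent (x : α) : IsStrongModule (incompComponent x) := by
  refine ⟨isModule_incompComponent x, fun U hU ⟨p, hpU, hpC⟩ => ?_⟩
  refine or_iff_not_imp_left.2 fun hUC => ?_
  obtain ⟨w, hwU, hwC⟩ := not_subset.1 hUC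
  suffices ∀ c, Relation.ReflTransGen (incompGraph α).Adj p c → c ∈ U from
    fun c hc => this c ((reachable_iff_reflTransGen p c).1 (hpC.symm.trans hc))
  intro c hpc
  induction hpc with
  | refl => exact hpU
  | @tail b c hpb hbc hbU =>
    -- were `c ∉ U`, the module `U` would carry the edge `b — c` over to `w — c`
    by_contra hcU
    have hxc : (incompGraph α).Reachable x c :=
      hpC.trans (((reachable_iff_reflTransGen p b).2 hpb).trans hbc.reachable)
    exact hwC (hxc.trans (hU.incompAdj hbU hwU hcU hbc).symm.reachable)

theorem IsStrongModule.subset_incompComponent_union_Ici {U : Set α} (hU : IsStrongModule U)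
    {a z : α} (ha : a ∈ U) (hz : z ∉ U) (haz : a ≤ z) : U ⊆ incompComponent a ∪ Ici a :=
  (hU.2 _ (isModule_incompComponent_union_Ici a) ⟨a, Or.inl .rfl, ha⟩).resolve_left
    fun h => hz (h (Or.inr haz))

theorem IsStrongModule.subset_incompComponent_union_Iic {U : Set α} (hU : IsStrongModule U)
    {a z : α} (ha : a ∈ U) (hz : z ∉ U) (hza : z ≤ a) : U ⊆ incompComponent a ∪ Iic a :=
  (hU.2 _ (isModule_incompComponent_union_Iic a) ⟨a, Or.inl .rfl, ha⟩).resolve_left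
    fun h => hz (h (Or.inr hza))

theorem IsStrongModule.eq_incompComponent_of_subset {U : Set α} (hU : IsStrongModule U)
    (hUne : U ≠ univ) {x : α} (hxU : incompComponent x ⊆ U) : U = incompComponent x := by
  refine Subset.antisymm (fun w hw => ?_) hxU
  by_contra hxw
  obtain ⟨z, hz⟩ := (ne_univ_iff_exists_notMem U).1 hUne
  have hx : x ∈ U := hxU .rfl
  have hwx : ¬ (incompGraph α).Reachable w x := (hxw ·.symm)
  have hne : x ≠ w := fun h => hxw (h ▸ .rfl)
  have hxz : ¬ (incompGraph α).Reachable x z := (hz <| hxU ·)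
  rcases le_or_le_of_not_reachable hxz with hle | hle
  · have hwz : w ≤ z := (hU.1 x hx w hw z hz).1.1 hle
    exact hne (le_antisymm ((hU.subset_incompComponent_union_Ici hx hz hle hw).resolve_left hxw)
      ((hU.subset_incompComponent_union_Ici hw hz hwz hx).resolve_left hwx))
  · have hzw : z ≤ w := (hU.1 x hx w hw z hz).2.1 hle
    exact hne (le_antisymm ((hU.subset_incompComponent_union_Iic hw hz hzw hx).resolve_left hwx)
      ((hU.subset_incompComponent_union_Iic hx hz hle hw).resolve_left hxw))

theorem isMaxProperStrongModule_iff_exists_eq_incompComponent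
    (hdis : ¬ (incompGraph α).Connected) {T : Set α} :
    IsMaxProperStrongModule T ↔ ∃ x : α, T = incompComponent x := by
  constructor
  · rintro ⟨hT, ⟨x, hxT⟩, hTne, hTmax⟩
    refine ⟨x, ?_⟩
    rcases hT.2 _ (isModule_incompComponent x) ⟨x, .rfl, hxT⟩ with hCT | hTC
    · exact hT.eq_incompComponent_of_subset hTne hCT
    · exact (hTmax _ (isStrongModule_incompComponent x) (setOf_reachable_ne_univ hdis x) hTC).symm
  · rintro ⟨x, rfl⟩
    exact ⟨isStrongModule_incompComponent x, ⟨x, .rfl⟩, setOf_reachable_ne_univ hdis x,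
      fun _ hU hUne => hU.eq_incompComponent_of_subset hUne⟩

end

theorem series_type_gallai_general [PartialOrder α] (hdis : ¬ (incompGraph α).Connected) :
    (∀ T : Set α, IsMaxProperStrongModule T ↔
      ∃ x : α, T = {y | (incompGraph α).Reachable x y}) ∧
    (∀ x y : α, ¬ (incompGraph α).Reachable x y → x ≤ y ∨ y ≤ x) ∧
    (∀ x x' y y' : α, (incompGraph α).Reachable x x' → (incompGraph α).Reachable y y' →
      ¬ (incompGraph α).Reachable x y → (x ≤ y ↔ x' ≤ y')) :=
  ⟨fun _ => isMaxProperStrongModule_iff_exists_eq_incompComponent hdis,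
    fun _ _ => le_or_le_of_not_reachable, fun _ _ _ _ => le_iff_le_of_reachable_of_reachable⟩

/-- For a finite poset with at least two elements whose incomparability graph is
disconnected (series type), the maximal proper strong modules are exactly the
connected components of the incomparability graph, any two elements of distinct
components are comparable, and the comparison is uniform across components, so the
quotient is a chain. -/
theorem series_type_gallai [Fintype α] [PartialOrder α]
    (hcard : 2 ≤ Fintype.card α) (hdis : ¬ (incompGraph α).Connected) :
    (∀ T : Set α, IsMaxProperStrongModule T ↔
      ∃ x : α, T = {y | (incompGraph α).Reachable x y}) ∧
    (∀ x y : α, ¬ (incompGraph α).Reachable x y → x ≤ y ∨ y ≤ x) ∧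
    (∀ x x' y y' : α, (incompGraph α).Reachable x x' → (incompGraph α).Reachable y y' →
      ¬ (incompGraph α).Reachable x y → (x ≤ y ↔ x' ≤ y')) :=
  series_type_gallai_general hdis
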